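/- Cardinality of the overlap classes with disjoint attribute sets (equation (37)). Fix a user i∈[n], an integer k≥3 and an integer α with 1≤α≤k, and assume m≥2k and n−1≥2k−α. Let Λ_{ii}^{(0,α)} denote the set of quadruples (S_1,S_2,T_1,T_2) such that: S_1,S_2∈G_{i,A} and T_1,T_2∈G_{i,B} for some disjoint k-sets A,B of attributes; every edge of S_1∪S_2∪T_1∪T_2 belongs to at least two of the four trees; it is not the case that simultaneously S_1=S_2, T_1=T_2 and the vertex sets of S_1 and T_1 intersect exactly in {i}; and the common intersection of the user–user edge sets of S_1,S_2,T_1,T_2 has exactly α edges. Then |Λ_{ii}^{(0,α)}| = C(m,k)·C(m−k,k)·C(n−1,α)·C(n−1−α,k−α)·C(n−1−k,k−α)·(k!)². -/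

import Mathlib

open Finset

/-- The set of attributes used by the tree encoded by `f` with root `i`: a tree of the
family `G_{i,A}` (the trees rooted at `i` made of `|A|` length-2 paths, pairwise disjoint
except at `i`, from `i` through a distinct user to a distinct attribute of `A`) is
faithfully encoded by the function `f` sending each attribute `a ∈ A` to the user (≠ `i`)
on the path from `i` to `a`, with the convention `f a = i` for `a ∉ A`. -/
def treeSupp {n m : ℕ} (i : Fin n) (f : Fin m → Fin n) : Finset (Fin m) :=
  Finset.univ.filter (fun a => f a ≠ i)

/-- `f` encodes a tree of the family `G_{i,A}`. -/
def IsPort {n m : ℕ} (i : Fin n) (A : Finset (Fin m)) (f : Fin m → Fin n) : Prop :=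
  treeSupp i f = A ∧ Set.InjOn f ↑(treeSupp i f)

/-- The user–user edges of the tree with root `i` encoded by `f`. -/
def userEdges {n m : ℕ} (i : Fin n) (f : Fin m → Fin n) : Finset (Sym2 (Fin n)) :=
  (treeSupp i f).image (fun a => s(i, f a))

/-- The user–attribute edges of the tree with root `i` encoded by `f`. -/
def attrEdges {n m : ℕ} (i : Fin n) (f : Fin m → Fin n) : Finset (Fin n × Fin m) :=
  (treeSupp i f).image (fun a => (f a, a))

/-- The port (non-root user) vertices of the tree with root `i` encoded by `f`. -/
def ports {n m : ℕ} (i : Fin n) (f : Fin m → Fin n) : Finset (Fin n) :=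
  (treeSupp i f).image f

/-- Every edge of the union graph `S₁ ∪ S₂ ∪ T₁ ∪ T₂` (where `S₁,T₁` are rooted at `i₁`
and `S₂,T₂` at `i₂`, with encodings `f₁,f₂,g₁,g₂`) belongs to at least two of the four
trees. -/
def CoveredTwice {n m : ℕ} (i1 i2 : Fin n) (f1 f2 g1 g2 : Fin m → Fin n) : Prop :=
  (∀ e ∈ userEdges i1 f1 ∪ userEdges i2 f2 ∪ userEdges i1 g1 ∪ userEdges i2 g2,
    2 ≤ (if e ∈ userEdges i1 f1 then 1 else 0) + (if e ∈ userEdges i2 f2 then 1 else 0)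
      + (if e ∈ userEdges i1 g1 then 1 else 0) + (if e ∈ userEdges i2 g2 then 1 else 0)) ∧
  (∀ p ∈ attrEdges i1 f1 ∪ attrEdges i2 f2 ∪ attrEdges i1 g1 ∪ attrEdges i2 g2,
    2 ≤ (if p ∈ attrEdges i1 f1 then 1 else 0) + (if p ∈ attrEdges i2 f2 then 1 else 0)
      + (if p ∈ attrEdges i1 g1 then 1 else 0) + (if p ∈ attrEdges i2 g2 then 1 else 0))

/-- `f` encodes a tree of the family `G_{i,A}` for some set `A` of `k` attributes. -/
def IsATree {n m : ℕ} (i : Fin n) (k : ℕ) (f : Fin m → Fin n) : Prop :=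
  (treeSupp i f).card = k ∧ Set.InjOn f ↑(treeSupp i f)

open scoped Classical in
/-- The class `Λ_{ii}^{(0,α)}`: quadruples `(S₁,S₂,T₁,T₂)` with `S₁,S₂ ∈ G_{i,A}` and
`T₁,T₂ ∈ G_{i,B}` for some disjoint `k`-sets of attributes `A,B`, such that every edge of
the union graph lies in at least two of the four trees, it is not the case that
simultaneously `S₁ = S₂`, `T₁ = T₂` and the vertex sets of `S₁` and `T₁` meet exactly in
`{i}`, and the four user–user edge sets have exactly `α` common edges. -/
noncomputable def Lambda0 {n m : ℕ} (i : Fin n) (k α : ℕ) :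
    Finset ((Fin m → Fin n) × (Fin m → Fin n) × (Fin m → Fin n) × (Fin m → Fin n)) :=
  Finset.univ.filter (fun q => IsATree i k q.1 ∧ IsATree i k q.2.1 ∧
    IsATree i k q.2.2.1 ∧ IsATree i k q.2.2.2 ∧
    treeSupp i q.1 = treeSupp i q.2.1 ∧ treeSupp i q.2.2.1 = treeSupp i q.2.2.2 ∧
    Disjoint (treeSupp i q.1) (treeSupp i q.2.2.1) ∧
    CoveredTwice i i q.1 q.2.1 q.2.2.1 q.2.2.2 ∧
    ¬ (q.1 = q.2.1 ∧ q.2.2.1 = q.2.2.2 ∧ Disjoint (ports i q.1) (ports i q.2.2.1) ∧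
        Disjoint (treeSupp i q.1) (treeSupp i q.2.2.1)) ∧
    (userEdges i q.1 ∩ userEdges i q.2.1 ∩ userEdges i q.2.2.1 ∩
        userEdges i q.2.2.2).card = α)

/-! If the attribute sets `A` and `B` are disjoint, a user–attribute edge of `S₁` can lie in no
tree but `S₁` and `S₂`, so covering every edge twice forces `S₁ = S₂`, and likewise `T₁ = T₂`;
the excluded case is then impossible, as the `α ≥ 1` common edges make the port sets of `S₁`
and `T₁` meet. Hence `Λ_{ii}^{(0,α)}` is in bijection with pairs `(S, T)` of trees on disjoint
attribute sets whose port sets share exactly `α` users. Such a pair amounts to the attribute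
sets `A, B` (`C(m,k)·C(m−k,k)` choices), the port sets `P, Q ⊆ [n] \ {i}` with `|P ∩ Q| = α`
(`C(n−1,k)·C(k,α)·C(n−1−k,k−α)` choices) and bijections `A → P`, `B → Q` (`(k!)²` choices);
finally `C(n−1,k)·C(k,α) = C(n−1,α)·C(n−1−α,k−α)`. -/

namespace Finset
variable {α : Type*} [DecidableEq α]

def overlapPairs (s : Finset α) (k l j : ℕ) : Finset (Finset α × Finset α) :=
  {p ∈ s.powersetCard k ×ˢ s.powersetCard l | #(p.1 ∩ p.2) = j}

theorem card_powersetCard_filter_card_inter {s t : Finset α} (ht : t ⊆ s) {l j : ℕ}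
    (hj : j ≤ l) :
    #{u ∈ s.powersetCard l | #(t ∩ u) = j} = (#t).choose j * (#s - #t).choose (l - j) := by
  rw [← card_sdiff_of_subset ht, ← card_powersetCard, ← card_powersetCard, ← card_product]
  refine card_nbij' (fun u => (t ∩ u, u \ t)) (fun p => p.1 ∪ p.2) ?_ ?_ ?_ ?_
  · intro u hu
    simp only [mem_coe, mem_filter, mem_product, mem_powersetCard] at hu ⊢
    have := card_inter_add_card_sdiff u t
    rw [inter_comm] at this
    exact ⟨⟨inter_subset_left, hu.2⟩, sdiff_subset_sdiff hu.1.1 subset_rfl, by omega⟩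
  · rintro ⟨v, w⟩ hvw
    simp only [mem_coe, mem_filter, mem_product, mem_powersetCard] at hvw ⊢
    have hd : Disjoint v w := disjoint_of_subset_left hvw.1.1 (subset_sdiff.1 hvw.2.1).2.symm
    have hv : t ∩ (v ∪ w) = v := by grind
    refine ⟨⟨union_subset (hvw.1.1.trans ht) (hvw.2.1.trans sdiff_subset), ?_⟩, ?_⟩
    · rw [card_union_of_disjoint hd]
      omega
    · rw [hv, hvw.1.2]
  · intro u _
    show t ∩ u ∪ u \ t = u
    rw [union_comm, inter_comm, sdiff_union_inter]
  · rintro ⟨v, w⟩ hvw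
    simp only [mem_coe, mem_product, mem_powersetCard, Prod.mk.injEq] at hvw ⊢
    grind

theorem card_overlapPairs (s : Finset α) (k : ℕ) {l j : ℕ} (hj : j ≤ l) :
    #(overlapPairs s k l j) = (#s).choose k * (k.choose j * (#s - k).choose (l - j)) := by
  rw [overlapPairs, card_filter, sum_product, ← card_powersetCard, card_eq_sum_ones, sum_mul,
    one_mul]
  refine sum_congr rfl fun t ht => ?_
  rw [mem_powersetCard] at ht
  rw [← card_filter, ← ht.2, card_powersetCard_filter_card_inter ht.1 hj]

end Finset

section
variable {n m : ℕ} (i : Fin n)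

theorem mem_treeSupp {f : Fin m → Fin n} {a : Fin m} : a ∈ treeSupp i f ↔ f a ≠ i := by
  simp [treeSupp]

theorem notMem_treeSupp {f : Fin m → Fin n} {a : Fin m} : a ∉ treeSupp i f ↔ f a = i := by
  simp [treeSupp]

theorem mem_attrEdges {f : Fin m → Fin n} {v : Fin n} {a : Fin m} :
    (v, a) ∈ attrEdges i f ↔ f a = v ∧ v ≠ i := by
  simp only [attrEdges, mem_image, mem_treeSupp, Prod.mk.injEq]
  constructor
  · rintro ⟨b, hb, rfl, rfl⟩
    exact ⟨rfl, hb⟩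
  · rintro ⟨rfl, hv⟩
    exact ⟨a, hv, rfl, rfl⟩

theorem eq_of_treeSupp_eq_of_attrEdges_subset {f f' : Fin m → Fin n}
    (hs : treeSupp i f = treeSupp i f') (h : attrEdges i f ⊆ attrEdges i f') : f = f' := by
  funext a
  by_cases ha : f a = i
  · rw [ha, (notMem_treeSupp i (f := f')).1 (hs ▸ (notMem_treeSupp i).2 ha)]
  · exact ((mem_attrEdges i).1 (h ((mem_attrEdges i).2 ⟨rfl, ha⟩))).1.symm

theorem ports_subset_erase (f : Fin m → Fin n) : ports i f ⊆ univ.erase i := by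
  intro v hv
  obtain ⟨a, ha, rfl⟩ := mem_image.1 hv
  exact mem_erase.2 ⟨(mem_treeSupp i).1 ha, mem_univ _⟩

theorem isATree_iff {k : ℕ} {f : Fin m → Fin n} :
    IsATree i k f ↔ #(treeSupp i f) = k ∧ #(ports i f) = k := by
  rw [IsATree, ports, ← card_image_iff]
  constructor
  · rintro ⟨hk, hf⟩
    exact ⟨hk, hf.trans hk⟩
  · rintro ⟨hk, hf⟩
    exact ⟨hk, hf.trans hk.symm⟩

theorem card_userEdges_inter (f g : Fin m → Fin n) :
    #(userEdges i f ∩ userEdges i g) = #(ports i f ∩ ports i g) := by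
  have hinj : Function.Injective (fun v : Fin n => s(i, v)) := fun _ _ => Sym2.congr_right.1
  have hports (f : Fin m → Fin n) : userEdges i f = (ports i f).image fun v => s(i, v) := by
    simp [userEdges, ports, image_image, Function.comp_def]
  rw [hports, hports, ← image_inter _ _ hinj, card_image_of_injective _ hinj]

theorem coveredTwice_self (f g : Fin m → Fin n) : CoveredTwice i i f f g g := by
  constructor <;>
  · intro e he
    simp only [mem_union] at he
    split_ifs <;> simp_all

theorem CoveredTwice.eq_of_disjoint {f₁ f₂ g₁ g₂ : Fin m → Fin n}
    (h : CoveredTwice i i f₁ f₂ g₁ g₂) (hf : treeSupp i f₁ = treeSupp i f₂)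
    (hg : treeSupp i g₁ = treeSupp i g₂) (hd : Disjoint (treeSupp i f₁) (treeSupp i g₁)) :
    f₁ = f₂ ∧ g₁ = g₂ := by
  have snd_mem {f : Fin m → Fin n} {p} (hp : p ∈ attrEdges i f) : p.2 ∈ treeSupp i f :=
    (mem_treeSupp i).2 (((mem_attrEdges i).1 hp).1 ▸ ((mem_attrEdges i).1 hp).2)
  constructor
  · refine eq_of_treeSupp_eq_of_attrEdges_subset i hf fun p hp => ?_
    have h₁ : p ∉ attrEdges i g₁ := fun h' => disjoint_left.1 hd (snd_mem hp) (snd_mem h')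
    have h₂ : p ∉ attrEdges i g₂ := fun h' => disjoint_left.1 hd (snd_mem hp) (hg ▸ snd_mem h')
    have := h.2 p (by simp [hp])
    by_contra h'
    simp [hp, h', h₁, h₂] at this
  · refine eq_of_treeSupp_eq_of_attrEdges_subset i hg fun p hp => ?_
    have h₁ : p ∉ attrEdges i f₁ := fun h' => disjoint_left.1 hd (snd_mem h') (snd_mem hp)
    have h₂ : p ∉ attrEdges i f₂ := fun h' => disjoint_left.1 hd (hf ▸ snd_mem h') (snd_mem hp)
    have := h.2 p (by simp [hp])
    by_contra h'
    simp [hp, h', h₁, h₂] at this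

def treesWith (A : Finset (Fin m)) (P : Finset (Fin n)) : Finset (Fin m → Fin n) :=
  {f | treeSupp i f = A ∧ ports i f = P}

theorem mem_treesWith {A : Finset (Fin m)} {P : Finset (Fin n)} {f : Fin m → Fin n} :
    f ∈ treesWith i A P ↔ treeSupp i f = A ∧ ports i f = P := by
  simp [treesWith]

theorem injOn_of_mem_treesWith {A : Finset (Fin m)} {P : Finset (Fin n)} {f : Fin m → Fin n}
    (hAP : #A = #P) (hf : f ∈ treesWith i A P) : Set.InjOn f A := by
  obtain ⟨hA, hP⟩ := (mem_treesWith i).1 hf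
  rw [← card_image_iff, ← hA]
  exact (congrArg card hP).trans (hA ▸ hAP.symm)

theorem dite_mem_treesWith {A : Finset (Fin m)} {P : Finset (Fin n)} (hAP : #A = #P)
    (hi : i ∉ P) (e : A ↪ P) :
    (fun a => if h : a ∈ A then (e ⟨a, h⟩ : Fin n) else i) ∈ treesWith i A P := by
  have hsupp : treeSupp i (fun a => if h : a ∈ A then (e ⟨a, h⟩ : Fin n) else i) = A := by
    ext a
    rw [mem_treeSupp]
    by_cases ha : a ∈ A
    · simpa [ha] using ne_of_mem_of_not_mem (e ⟨a, ha⟩).2 hi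
    · simp [ha]
  refine (mem_treesWith i).2 ⟨hsupp, eq_of_subset_of_card_le ?_ ?_⟩
  · intro v hv
    obtain ⟨a, ha, rfl⟩ := mem_image.1 hv
    rw [hsupp] at ha
    simp [ha]
  · rw [ports, hsupp, card_image_of_injOn, hAP]
    intro a ha b hb hab
    simp only [mem_coe] at ha hb
    simpa [ha, hb] using hab

theorem card_treesWith {A : Finset (Fin m)} {P : Finset (Fin n)} (hAP : #A = #P) (hi : i ∉ P) :
    #(treesWith i A P) = (#P).factorial := by
  have hemb : #(univ : Finset (A ↪ P)) = (#P).factorial := by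
    simp [Fintype.card_embedding_eq, hAP, Nat.descFactorial_self]
  rw [← hemb]
  refine card_bij' (fun f hf => ⟨fun a => ⟨f a, ?_⟩, fun a b hab => ?_⟩)
    (fun e _ a => if h : a ∈ A then e ⟨a, h⟩ else i) (fun _ _ => mem_univ _)
    (fun e _ => dite_mem_treesWith i hAP hi e) ?_ ?_
  · obtain ⟨hA, hP⟩ := (mem_treesWith i).1 hf
    exact hP ▸ mem_image_of_mem f (hA ▸ a.2)
  · exact Subtype.ext (injOn_of_mem_treesWith i hAP hf a.2 b.2 (congrArg Subtype.val hab))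
  · intro f hf
    obtain ⟨hA, -⟩ := (mem_treesWith i).1 hf
    funext a
    by_cases ha : a ∈ A
    · rw [dif_pos ha]
      rfl
    · rw [dif_neg ha]
      exact ((notMem_treeSupp i).1 (hA ▸ ha)).symm
  · intro e _
    ext a
    simp

open scoped Classical in
noncomputable def treePairs (k α : ℕ) : Finset ((Fin m → Fin n) × (Fin m → Fin n)) :=
  {x | IsATree i k x.1 ∧ IsATree i k x.2 ∧ Disjoint (treeSupp i x.1) (treeSupp i x.2) ∧
    #(ports i x.1 ∩ ports i x.2) = α}

theorem Lambda0_eq_image_treePairs {k α : ℕ} (hα : 1 ≤ α) :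
    Lambda0 i k α = (treePairs (m := m) i k α).image fun x => (x.1, x.1, x.2, x.2) := by
  ext ⟨f₁, f₂, g₁, g₂⟩
  simp only [Lambda0, treePairs, mem_filter, mem_univ, true_and, mem_image, Prod.exists,
    Prod.mk.injEq]
  constructor
  · rintro ⟨hf₁, -, hg₁, -, hf, hg, hd, hc, -, hα⟩
    obtain ⟨rfl, rfl⟩ := hc.eq_of_disjoint i hf hg hd
    rw [inter_self, inter_assoc, inter_self, card_userEdges_inter] at hα
    exact ⟨f₁, g₁, ⟨hf₁, hg₁, hd, hα⟩, rfl, rfl, rfl, rfl⟩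
  · rintro ⟨f, g, ⟨hf, hg, hd, hα⟩, rfl, rfl, rfl, rfl⟩
    refine ⟨hf, hf, hg, hg, rfl, rfl, hd, coveredTwice_self i f g, ?_, ?_⟩
    · rintro ⟨-, -, hp, -⟩
      rw [disjoint_iff_inter_eq_empty.1 hp, card_empty] at hα
      omega
    · rwa [inter_self, inter_assoc, inter_self, card_userEdges_inter]

theorem card_treePairs (k α : ℕ) :
    #(treePairs (m := m) i k α) =
      #(overlapPairs (univ : Finset (Fin m)) k k 0) * #(overlapPairs (univ.erase i) k k α) *
        k.factorial ^ 2 := by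
  set S := overlapPairs (univ : Finset (Fin m)) k k 0 ×ˢ overlapPairs (univ.erase i) k k α
  let shape (x : (Fin m → Fin n) × (Fin m → Fin n)) :=
    ((treeSupp i x.1, treeSupp i x.2), (ports i x.1, ports i x.2))
  have hmem (x) : x ∈ treePairs i k α ↔ shape x ∈ S := by
    simp only [treePairs, isATree_iff, disjoint_iff_inter_eq_empty, mem_filter, mem_univ,
      true_and, overlapPairs, card_eq_zero, mem_product, mem_powersetCard, subset_univ,
      ports_subset_erase, S, shape]
    tauto
  have hfiber : ∀ t ∈ S, #{x ∈ treePairs i k α | shape x = t} = k.factorial ^ 2 := by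
    rintro ⟨⟨A, B⟩, P, Q⟩ ht
    have hS := ht
    simp only [S, overlapPairs, mem_product, mem_filter, mem_powersetCard, subset_erase] at hS
    obtain ⟨⟨⟨⟨-, hA⟩, -, hB⟩, -⟩, ⟨⟨⟨-, hiP⟩, hP⟩, ⟨-, hiQ⟩, hQ⟩, -⟩ := hS
    have hprod : {x ∈ treePairs i k α | shape x = ((A, B), P, Q)} =
        treesWith i A P ×ˢ treesWith i B Q := by
      ext x
      simp only [mem_filter, mem_product, mem_treesWith, hmem]
      constructor
      · rintro ⟨-, h⟩
        simp_all [shape]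
      · rintro ⟨⟨h₁, h₂⟩, h₃, h₄⟩
        have hx : shape x = ((A, B), P, Q) := by simp [shape, h₁, h₂, h₃, h₄]
        exact ⟨hx ▸ ht, hx⟩
    rw [hprod, card_product, card_treesWith i (hA.trans hP.symm) hiP,
      card_treesWith i (hB.trans hQ.symm) hiQ, hP, hQ, sq]
  rw [card_eq_sum_card_fiberwise fun x hx => (hmem x).1 hx, sum_congr rfl hfiber, sum_const,
    card_product, smul_eq_mul]

end

theorem card_Lambda0_general {n m : ℕ} (i : Fin n) (k α : ℕ)
    (hα1 : 1 ≤ α) (hαk : α ≤ k) :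
    (Lambda0 (m := m) i k α).card =
      Nat.choose m k * Nat.choose (m - k) k * Nat.choose (n - 1) α *
        Nat.choose (n - 1 - α) (k - α) * Nat.choose (n - 1 - k) (k - α) *
        Nat.factorial k ^ 2 := by
  have hdiag : Function.Injective fun x : (Fin m → Fin n) × (Fin m → Fin n) =>
      (x.1, x.1, x.2, x.2) := fun x y h => by simp_all [Prod.ext_iff]
  have hU : #(univ.erase i) = n - 1 := by simp [card_erase_of_mem]
  rw [Lambda0_eq_image_treePairs i hα1, card_image_of_injective _ hdiag, card_treePairs,
    card_overlapPairs _ _ k.zero_le, card_overlapPairs _ _ hαk, hU, card_univ, Fintype.card_fin,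
    Nat.choose_zero_right, Nat.sub_zero, ← mul_assoc ((n - 1).choose k), Nat.choose_mul hαk]
  ring

/-- **Cardinality of the overlap classes with disjoint attribute sets (equation (37)).**
`|Λ_{ii}^{(0,α)}| = C(m,k)·C(m−k,k)·C(n−1,α)·C(n−1−α,k−α)·C(n−1−k,k−α)·(k!)²`. -/
theorem card_Lambda0 {n m : ℕ} (i : Fin n) (k α : ℕ) (hk : 3 ≤ k)
    (hα1 : 1 ≤ α) (hαk : α ≤ k) (hm : 2 * k ≤ m) (hn : 2 * k - α ≤ n - 1) :
    (Lambda0 (m := m) i k α).card =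
      Nat.choose m k * Nat.choose (m - k) k * Nat.choose (n - 1) α *
        Nat.choose (n - 1 - α) (k - α) * Nat.choose (n - 1 - k) (k - α) *
        Nat.factorial k ^ 2 :=
  card_Lambda0_general i k α hα1 hαk
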